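/- Fix ν > 0, M > 0, γ₀, γ₁ ∈ (0,1), γ₂ ∈ (0,1), t ≥ 0, and let b = b(t,·) be the shear flow at time t. Let q(y) = b''(y)/b(y) for y ≠ 0, extended continuously to y = 0. Suppose λ₁ < 0 and λ₂ < 0 are such that for j = 1,2 there exists a nonzero twice continuously differentiable real function φⱼ with φⱼ, φⱼ', φⱼ'' ∈ L²(ℝ) satisfying −φⱼ''(y) + q(y)·φⱼ(y) = λⱼ·φⱼ(y) for all y ∈ ℝ. Then λ₁ = λ₂; that is, the Schrödinger operator L = −d²/dy² + b''/b has at most one negative eigenvalue. -/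

import Mathlib

/-!
The shear flow `b` is itself a zero-energy solution, `-b'' + q b = 0`, and `b' ≥ 1` gives
`b(y) ≥ y` for `y ≥ 0`. Let `φ` be an eigenfunction with eigenvalue `λ < 0` vanishing at some
`z ≥ 0` with `φ'(z) > 0`. The Wronskian `W = φ' b - φ b'` has `W(z) ≥ 0` and `W' = -λ φ b`, so
`W ≥ 0` as long as `φ ≥ 0` after `z`, and there `φ / b`, whose derivative is `W / b²`, is
nondecreasing. Hence `φ` never returns to zero after `z`, and eventually `φ ≥ ε b ≥ ε y`,
contradicting `φ ∈ L²`. Reflecting `y ↦ -y` and `φ ↦ -φ` covers the other cases, and uniqueness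
for the ODE rules out `φ(z) = φ'(z) = 0`: eigenfunctions with negative eigenvalue have no zeros,
so two of them cannot be orthogonal. But the Wronskian of two eigenfunctions is integrable with
derivative `(λ₂ - λ₁) φ₁ φ₂`, so `(λ₂ - λ₁) ∫ φ₁ φ₂ = 0`.
-/

open MeasureTheory Real Filter Set

noncomputable section

/-- The shear flow `b(t,y)` from the paper (eq. (1.6)/(2.1)):
`b(t,y) = y + M·(∫₀^y (γ₀²/√(4νt+γ₀²))·exp(−z²/(4νt+γ₀²)) dz
  − γ₂·∫₀^y (γ₀²γ₁³/√(4νt+γ₀²γ₁²))·exp(−z²/(4νt+γ₀²γ₁²)) dz)`. -/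
def shearFlow (ν M γ₀ γ₁ γ₂ : ℝ) (t y : ℝ) : ℝ :=
  y + M * ((∫ z in (0:ℝ)..y, γ₀^2 / Real.sqrt (4*ν*t + γ₀^2) * Real.exp (-z^2 / (4*ν*t + γ₀^2)))
    - γ₂ * ∫ z in (0:ℝ)..y, γ₀^2 * γ₁^3 / Real.sqrt (4*ν*t + γ₀^2*γ₁^2) *
        Real.exp (-z^2 / (4*ν*t + γ₀^2*γ₁^2)))

/-- The potential `q = b''/b`, extended continuously at `y = 0`
(where `b(0) = b''(0) = 0`). -/
def qExt (b : ℝ → ℝ) : ℝ → ℝ := fun y =>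
  if y = 0 then limUnder (nhdsWithin 0 {(0:ℝ)}ᶜ) (fun z => deriv (deriv b) z / b z)
  else deriv (deriv b) y / b y

/-- The set of Rayleigh quotients `∫|φ'|² + ∫ (b''/b)·φ²` over normalized `φ ∈ H¹(ℝ)`. -/
def lambdaSet (b : ℝ → ℝ) : Set ℝ :=
  { E | ∃ φ : ℝ → ℝ, Differentiable ℝ φ ∧ MemLp φ 2 (volume : Measure ℝ) ∧
      MemLp (deriv φ) 2 (volume : Measure ℝ) ∧ (∫ y : ℝ, (φ y)^2) = 1 ∧
      E = (∫ y : ℝ, (deriv φ y)^2) + ∫ y : ℝ, qExt b y * (φ y)^2 }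

/-- `λ(M,t)`: the infimum of the Rayleigh quotient for the shear flow. -/
def lambdaVal (ν M γ₀ γ₁ γ₂ t : ℝ) : ℝ := sInf (lambdaSet (shearFlow ν M γ₀ γ₁ γ₂ t))

/-- `c` is an eigenvalue of the Rayleigh operator `R_{b,k} = b·Id − b''·(∂_y² − k²)⁻¹`:
there are `ω ∈ L²(ℝ,ℂ)`, `ω ≠ 0`, and a `C²` stream function `ψ` with
`ψ, ψ', ψ'' ∈ L²`, such that `ψ'' − k²ψ = ω` everywhere and
`(b − c)·ω = b''·ψ` almost everywhere. -/
def IsRayleighEigenvalue (b : ℝ → ℝ) (k : ℝ) (c : ℂ) : Prop :=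
  ∃ ω ψ : ℝ → ℂ,
    MemLp ω 2 (volume : Measure ℝ) ∧ ¬ (ω =ᵐ[(volume : Measure ℝ)] (0 : ℝ → ℂ)) ∧
    ContDiff ℝ 2 ψ ∧ MemLp ψ 2 (volume : Measure ℝ) ∧
    MemLp (deriv ψ) 2 (volume : Measure ℝ) ∧ MemLp (deriv (deriv ψ)) 2 (volume : Measure ℝ) ∧
    (∀ y : ℝ, deriv (deriv ψ) y - (k:ℂ)^2 * ψ y = ω y) ∧
    (∀ᵐ y : ℝ ∂(volume : Measure ℝ),
      ((b y : ℂ) - c) * ω y = ((deriv (deriv b) y : ℝ) : ℂ) * ψ y)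


open Topology

theorem not_memLp_two_of_forall_le {f : ℝ → ℝ} {a δ : ℝ} (hδ : 0 < δ)
    (hf : ∀ y, a ≤ y → δ ≤ f y) : ¬ MemLp f 2 := by
  intro hf2
  have hconst : IntegrableOn (fun _ => δ ^ 2) (Ici a) :=
    hf2.integrable_sq.integrableOn.mono' aestronglyMeasurable_const <|
      (ae_restrict_iff' measurableSet_Ici).2 <| Eventually.of_forall fun y hy => by
        rw [Real.norm_eq_abs, abs_of_pos (by positivity)]
        exact pow_le_pow_left₀ hδ.le (hf y hy) 2
  simp [integrableOn_const_iff, hδ.ne'] at hconst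

theorem exists_pos_on_Ioc_of_hasDerivAt_pos {f : ℝ → ℝ} {f' z : ℝ} (hf : HasDerivAt f f' z)
    (hz : f z = 0) (hf' : 0 < f') : ∃ z₁ > z, ∀ y ∈ Ioc z z₁, 0 < f y := by
  have hslope : ∀ᶠ y in 𝓝[>] z, 0 < slope f z y :=
    ((hasDerivAt_iff_tendsto_slope.1 hf).mono_left (nhdsGT_le_nhdsNE z)).eventually
      (eventually_gt_nhds hf')
  obtain ⟨z₁, hz₁, hsub⟩ := mem_nhdsGT_iff_exists_Ioc_subset.1 hslope
  refine ⟨z₁, hz₁, fun y hy => ?_⟩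
  have hy' : 0 < slope f z y := hsub hy
  rwa [slope_def_field, hz, sub_zero, div_pos_iff_of_pos_right (sub_pos.2 hy.1)] at hy'

theorem integral_ne_zero_of_forall_ne_zero {f : ℝ → ℝ} (hf : Continuous f) (hfi : Integrable f)
    (h : ∀ y, f y ≠ 0) : ∫ y, f y ≠ 0 := by
  wlog h0 : 0 < f 0 generalizing f
  · have := this hf.neg hfi.neg (fun y => neg_ne_zero.2 (h y))
      (neg_pos.2 ((h 0).lt_of_le (not_lt.1 h0)))
    rwa [Pi.neg_def, integral_neg, neg_ne_zero] at this
  have hpos : 0 ≤ f := fun y => by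
    by_contra! hy
    obtain ⟨c, hc⟩ := intermediate_value_univ y 0 hf ⟨hy.le, h0.le⟩
    exact h c hc
  exact (integral_pos_of_integrable_nonneg_nonzero hf hfi hpos (h 0)).ne'

/-- `φ` solves `-φ'' + q φ = lam φ` on `ℝ`; its derivative `φ'` is carried as data so that
reflections and Wronskians can be written without `deriv`. -/
structure IsSchrodingerSolution (q : ℝ → ℝ) (lam : ℝ) (φ φ' : ℝ → ℝ) : Prop where
  hasDerivAt : ∀ y, HasDerivAt φ (φ' y) y
  hasDerivAt_deriv : ∀ y, HasDerivAt φ' ((q y - lam) * φ y) y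

namespace IsSchrodingerSolution

variable {q : ℝ → ℝ} {lam : ℝ} {φ φ' B B' : ℝ → ℝ}

theorem of_contDiff (hφ : ContDiff ℝ 2 φ)
    (heq : ∀ y, -deriv (deriv φ) y + q y * φ y = lam * φ y) :
    IsSchrodingerSolution q lam φ (deriv φ) where
  hasDerivAt y := (hφ.differentiable two_ne_zero y).hasDerivAt
  hasDerivAt_deriv y := by
    rw [show (q y - lam) * φ y = deriv (deriv φ) y by linear_combination heq y]
    exact (hφ.differentiable_deriv_two y).hasDerivAt

theorem continuous (h : IsSchrodingerSolution q lam φ φ') : Continuous φ :=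
  continuous_iff_continuousAt.2 fun y => (h.hasDerivAt y).continuousAt

theorem neg (h : IsSchrodingerSolution q lam φ φ') :
    IsSchrodingerSolution q lam (fun y => -φ y) (fun y => -φ' y) where
  hasDerivAt y := (h.hasDerivAt y).fun_neg
  hasDerivAt_deriv y := by simpa only [mul_neg] using (h.hasDerivAt_deriv y).fun_neg

theorem comp_neg (h : IsSchrodingerSolution q lam φ φ') :
    IsSchrodingerSolution (fun y => q (-y)) lam (fun y => φ (-y)) (fun y => -φ' (-y)) where
  hasDerivAt y := by
    simpa [Function.comp_def] using (h.hasDerivAt (-y)).comp y (hasDerivAt_neg y)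
  hasDerivAt_deriv y := by
    simpa [Function.comp_def] using ((h.hasDerivAt_deriv (-y)).comp y (hasDerivAt_neg y)).fun_neg

theorem hasDerivAt_wronskian {lam₁ lam₂ : ℝ} {φ₁ φ₁' φ₂ φ₂' : ℝ → ℝ}
    (h₁ : IsSchrodingerSolution q lam₁ φ₁ φ₁') (h₂ : IsSchrodingerSolution q lam₂ φ₂ φ₂')
    (y : ℝ) :
    HasDerivAt (fun y => φ₁' y * φ₂ y - φ₁ y * φ₂' y) ((lam₂ - lam₁) * (φ₁ y * φ₂ y)) y :=
  (((h₁.hasDerivAt_deriv y).mul (h₂.hasDerivAt y)).sub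
    ((h₁.hasDerivAt y).mul (h₂.hasDerivAt_deriv y))).congr_deriv (by ring)

theorem integral_mul_eq_zero {lam₁ lam₂ : ℝ} {φ₁ φ₁' φ₂ φ₂' : ℝ → ℝ}
    (h₁ : IsSchrodingerSolution q lam₁ φ₁ φ₁') (h₂ : IsSchrodingerSolution q lam₂ φ₂ φ₂')
    (hne : lam₁ ≠ lam₂) (hφ₁ : MemLp φ₁ 2) (hφ₁' : MemLp φ₁' 2) (hφ₂ : MemLp φ₂ 2)
    (hφ₂' : MemLp φ₂' 2) :
    ∫ y, φ₁ y * φ₂ y = 0 := by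
  have hW := integral_eq_zero_of_hasDerivAt_of_integrable (hasDerivAt_wronskian h₁ h₂)
    ((hφ₁.integrable_mul hφ₂).const_mul _)
    ((hφ₁'.integrable_mul hφ₂).sub (hφ₁.integrable_mul hφ₂'))
  rw [integral_const_mul, mul_eq_zero] at hW
  exact hW.resolve_left (sub_ne_zero.2 hne.symm)

theorem eq_zero_of_eq_zero_of_deriv_eq_zero (h : IsSchrodingerSolution q lam φ φ')
    (hq : Continuous q) {z : ℝ} (hz : φ z = 0) (hz' : φ' z = 0) : φ = 0 := by
  ext x
  have hxz : x ∈ Icc (min x z - 1) (max x z + 1) :=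
    ⟨by linarith [min_le_left x z], by linarith [le_max_left x z]⟩
  have hqc : ContinuousOn (fun t => q t - lam) (Icc (min x z - 1) (max x z + 1)) := by fun_prop
  obtain ⟨C, hC⟩ := isCompact_Icc.exists_bound_of_continuousOn hqc
  have hv : ∀ t ∈ Ioo (min x z - 1) (max x z + 1), LipschitzOnWith (max 1 C.toNNReal)
      (fun p : ℝ × ℝ => (p.2, (q t - lam) * p.1)) univ := by
    intro t ht
    refine ((LipschitzWith.prod_snd.prodMk
      ((lipschitzWith_smul (q t - lam)).comp LipschitzWith.prod_fst)).weaken ?_).lipschitzOnWith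
    rw [mul_one]
    gcongr
    rw [← NNReal.coe_le_coe, coe_nnnorm]
    exact (hC t (Ioo_subset_Icc_self ht)).trans (le_coe_toNNReal C)
  have hsol := ODE_solution_unique_of_mem_Icc hv (t₀ := z)
    ⟨by linarith [min_le_right x z], by linarith [le_max_right x z]⟩
    (f := fun t => (φ t, φ' t)) (g := fun _ => 0)
    (HasDerivAt.continuousOn fun t _ => (h.hasDerivAt t).prodMk (h.hasDerivAt_deriv t))
    (fun t _ => (h.hasDerivAt t).prodMk (h.hasDerivAt_deriv t)) (fun _ _ => trivial)
    continuousOn_const (fun t _ => (hasDerivAt_const t 0).congr_deriv (by ext <;> simp))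
    (fun _ _ => trivial) (by simp [hz, hz'])
  exact congrArg Prod.fst (hsol hxz)


theorem monotoneOn_div (h : IsSchrodingerSolution q lam φ φ') (hlam : lam < 0)
    (hB : IsSchrodingerSolution q 0 B B') (hBy : ∀ y, 0 ≤ y → y ≤ B y) {z : ℝ} (hz : 0 ≤ z)
    (hφz : φ z = 0) (hφ'z : 0 ≤ φ' z) {s : Set ℝ} (hs : Convex ℝ s) (hzs : IsLeast s z)
    (hφs : ∀ y ∈ s, 0 ≤ φ y) :
    MonotoneOn (fun y => φ y / B y) (s ∩ Ioi z) := by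
  have hW := h.hasDerivAt_wronskian hB
  have hWmono : MonotoneOn (fun y => φ' y * B y - φ y * B' y) s := by
    refine monotoneOn_of_deriv_nonneg hs (HasDerivAt.continuousOn fun y _ => hW y)
      (fun y _ => (hW y).differentiableAt.differentiableWithinAt) fun y hy => ?_
    have hys := interior_subset hy
    rw [(hW y).deriv]
    have hBy' := hBy y (hz.trans (hzs.2 hys))
    exact mul_nonneg (by linarith) (mul_nonneg (hφs y hys) (by linarith [hzs.2 hys]))
  have hBpos : ∀ y ∈ Ioi z, 0 < B y := fun y hy => by
    linarith [hBy y (hz.trans (le_of_lt hy)), mem_Ioi.1 hy]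
  have hdiv : ∀ y ∈ Ioi z,
      HasDerivAt (fun y => φ y / B y) ((φ' y * B y - φ y * B' y) / B y ^ 2) y :=
    fun y hy => (h.hasDerivAt y).div (hB.hasDerivAt y) (hBpos y hy).ne'
  refine monotoneOn_of_deriv_nonneg (hs.inter (convex_Ioi z))
    (HasDerivAt.continuousOn fun y hy => hdiv y hy.2)
    (fun y hy => (hdiv y (interior_subset hy).2).differentiableAt.differentiableWithinAt)
    fun y hy => ?_
  obtain ⟨hys, hyz⟩ := interior_subset hy
  rw [(hdiv y hyz).deriv]
  have hWz : 0 ≤ φ' z * B z - φ z * B' z := by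
    rw [hφz, zero_mul, sub_zero]
    exact mul_nonneg hφ'z (hz.trans (hBy z hz))
  exact div_nonneg (hWz.trans (hWmono hzs.1 hys (hzs.2 hys))) (sq_nonneg _)

theorem pos_of_pos_on_Ioc (h : IsSchrodingerSolution q lam φ φ') (hlam : lam < 0)
    (hB : IsSchrodingerSolution q 0 B B') (hBy : ∀ y, 0 ≤ y → y ≤ B y) {z z₁ : ℝ} (hz : 0 ≤ z)
    (hφz : φ z = 0) (hφ'z : 0 ≤ φ' z) (hz₁ : z < z₁) (hpos : ∀ y ∈ Ioc z z₁, 0 < φ y) :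
    ∀ y, z₁ ≤ y → 0 < φ y := by
  by_contra! hneg
  -- `d = sInf T` is the first point past `z₁` with `φ ≤ 0`; `φ / B` nondecreasing forces `φ d > 0`
  set T := Ici z₁ ∩ φ ⁻¹' Iic 0
  have hbdd : BddBelow T := ⟨z₁, fun y hy => hy.1⟩
  obtain ⟨y₀, hy₀, hφy₀⟩ := hneg
  have hd : sInf T ∈ T :=
    (isClosed_Ici.inter (isClosed_Iic.preimage h.continuous)).csInf_mem ⟨y₀, hy₀, hφy₀⟩ hbdd
  set d := sInf T
  have hφz₁ := hpos z₁ ⟨hz₁, le_rfl⟩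
  have hz₁d : z₁ < d := lt_of_le_of_ne hd.1 fun hd' => by
    linarith [show φ d ≤ 0 from hd.2, hd' ▸ hφz₁]
  have hnonneg : ∀ y ∈ Ico z d, 0 ≤ φ y := by
    intro y hy
    rcases eq_or_lt_of_le hy.1 with rfl | hzy
    · exact hφz.ge
    rcases le_or_gt y z₁ with hyz₁ | hyz₁
    · exact (hpos y ⟨hzy, hyz₁⟩).le
    by_contra! hφy
    exact notMem_of_lt_csInf hy.2 hbdd ⟨hyz₁.le, hφy.le⟩
  have hmono := monotoneOn_div h hlam hB hBy hz hφz hφ'z (convex_Ico z d)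
    (isLeast_Ico (hz₁.trans hz₁d)) hnonneg
  have hBz₁ : 0 < B z₁ := by linarith [hBy z₁ (hz.trans hz₁.le)]
  have hle : ∀ y ∈ Ico z₁ d, φ z₁ / B z₁ * B y ≤ φ y := fun y hy => by
    have hBy' : 0 < B y := by linarith [hBy y (by linarith [hy.1]), hy.1]
    rw [← le_div_iff₀ hBy']
    exact hmono ⟨⟨hz₁.le, hz₁d⟩, hz₁⟩ ⟨⟨hz₁.le.trans hy.1, hy.2⟩, hz₁.trans_le hy.1⟩ hy.1
  have hd_le := ContinuousWithinAt.closure_le (f := fun y => φ z₁ / B z₁ * B y)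
    (closure_Ico hz₁d.ne ▸ right_mem_Icc.2 hz₁d.le)
    (continuous_const.mul hB.continuous).continuousWithinAt h.continuous.continuousWithinAt hle
  have hBd : 0 < B d := by linarith [hBy d (by linarith)]
  have : 0 < φ z₁ / B z₁ * B d := by positivity
  linarith [show φ d ≤ 0 from hd.2]

theorem deriv_nonpos_of_eq_zero (h : IsSchrodingerSolution q lam φ φ') (hlam : lam < 0)
    (hφ : MemLp φ 2) (hB : IsSchrodingerSolution q 0 B B') (hBy : ∀ y, 0 ≤ y → y ≤ B y)
    {z : ℝ} (hz : 0 ≤ z) (hφz : φ z = 0) : φ' z ≤ 0 := by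
  by_contra! hφ'z
  obtain ⟨z₁, hz₁, hpos⟩ := exists_pos_on_Ioc_of_hasDerivAt_pos (h.hasDerivAt z) hφz hφ'z
  have hpos' := pos_of_pos_on_Ioc h hlam hB hBy hz hφz hφ'z.le hz₁ hpos
  have hnonneg : ∀ y ∈ Ici z, 0 ≤ φ y := by
    intro y hy
    rcases le_or_gt z₁ y with hz₁y | hyz₁
    · exact (hpos' y hz₁y).le
    rcases eq_or_lt_of_le (mem_Ici.1 hy) with rfl | hzy
    · exact hφz.ge
    · exact (hpos y ⟨hzy, hyz₁.le⟩).le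
  have hmono := monotoneOn_div h hlam hB hBy hz hφz hφ'z.le (convex_Ici z) isLeast_Ici hnonneg
  have hBz₁ : 0 < B z₁ := by linarith [hBy z₁ (hz.trans hz₁.le)]
  have hε : 0 < φ z₁ / B z₁ := div_pos (hpos z₁ ⟨hz₁, le_rfl⟩) hBz₁
  refine not_memLp_two_of_forall_le (a := z₁) (mul_pos hε (hz.trans_lt hz₁)) (fun y hy => ?_) hφ
  have hBy' := hBy y (by linarith)
  calc φ z₁ / B z₁ * z₁ ≤ φ z₁ / B z₁ * B y := by gcongr; linarith
    _ ≤ φ y := by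
      rw [← le_div_iff₀ (by linarith)]
      exact hmono ⟨mem_Ici.2 hz₁.le, hz₁⟩ ⟨mem_Ici.2 (by linarith), mem_Ioi.2 (by linarith)⟩ hy

theorem deriv_eq_zero_of_eq_zero (h : IsSchrodingerSolution q lam φ φ') (hlam : lam < 0)
    (hφ : MemLp φ 2) (hB : IsSchrodingerSolution q 0 B B') (hBy : ∀ y, 0 ≤ y → y ≤ B y)
    {z : ℝ} (hz : 0 ≤ z) (hφz : φ z = 0) : φ' z = 0 :=
  le_antisymm (h.deriv_nonpos_of_eq_zero hlam hφ hB hBy hz hφz) <| neg_nonpos.1 <|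
    h.neg.deriv_nonpos_of_eq_zero hlam hφ.neg hB hBy hz (by simp [hφz])

theorem ne_zero (h : IsSchrodingerSolution q lam φ φ') (hlam : lam < 0) (hφ : MemLp φ 2)
    (hφ0 : φ ≠ 0) (hq : Continuous q) (hB : IsSchrodingerSolution q 0 B B')
    (hBpos : ∀ y, 0 ≤ y → y ≤ B y) (hBneg : ∀ y, y ≤ 0 → B y ≤ y) (z : ℝ) : φ z ≠ 0 := by
  intro hφz
  refine hφ0 (h.eq_zero_of_eq_zero_of_deriv_eq_zero hq hφz ?_)
  rcases le_total 0 z with hz | hz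
  · exact h.deriv_eq_zero_of_eq_zero hlam hφ hB hBpos hz hφz
  · have := h.comp_neg.deriv_eq_zero_of_eq_zero hlam
      (hφ.comp_measurePreserving (Measure.measurePreserving_neg volume)) hB.comp_neg.neg
      (fun y hy => by linarith [hBneg (-y) (neg_nonpos.2 hy)]) (neg_nonneg.2 hz)
      (by simpa using hφz)
    simpa using this

end IsSchrodingerSolution

section OneLeDeriv

variable {f f' : ℝ → ℝ}

theorem monotone_sub_self_of_one_le_deriv (hf : ∀ y, HasDerivAt f (f' y) y)
    (hf' : ∀ y, 1 ≤ f' y) : Monotone fun y => f y - y := by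
  have hd y := (hf y).fun_sub (hasDerivAt_id' y)
  refine monotone_of_deriv_nonneg (fun y => (hd y).differentiableAt) fun y => ?_
  rw [(hd y).deriv]
  linarith [hf' y]

theorem self_le_of_one_le_deriv (hf : ∀ y, HasDerivAt f (f' y) y) (hf' : ∀ y, 1 ≤ f' y)
    (h0 : f 0 = 0) {y : ℝ} (hy : 0 ≤ y) : y ≤ f y := by
  have := monotone_sub_self_of_one_le_deriv hf hf' hy
  simp only [h0, sub_zero] at this
  linarith

theorem le_self_of_one_le_deriv (hf : ∀ y, HasDerivAt f (f' y) y) (hf' : ∀ y, 1 ≤ f' y)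
    (h0 : f 0 = 0) {y : ℝ} (hy : y ≤ 0) : f y ≤ y := by
  have := monotone_sub_self_of_one_le_deriv hf hf' hy
  simp only [h0, sub_zero] at this
  linarith

theorem ne_zero_of_one_le_deriv (hf : ∀ y, HasDerivAt f (f' y) y) (hf' : ∀ y, 1 ≤ f' y)
    (h0 : f 0 = 0) {y : ℝ} (hy : y ≠ 0) : f y ≠ 0 := by
  rcases hy.lt_or_gt with hneg | hpos
  · linarith [le_self_of_one_le_deriv hf hf' h0 hneg.le]
  · linarith [self_le_of_one_le_deriv hf hf' h0 hpos.le]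

end OneLeDeriv

theorem continuous_of_eq_div {q f g : ℝ → ℝ} (hf : Continuous f) (hg : Continuous g)
    (hg0 : ∀ y, y ≠ 0 → g y ≠ 0) (hq : ∀ y, y ≠ 0 → q y = f y / g y)
    (hq0 : ContinuousAt q 0) : Continuous q := by
  refine continuous_iff_continuousAt.2 fun y => ?_
  rcases eq_or_ne y 0 with rfl | hy
  · exact hq0
  · refine (hf.continuousAt.div hg.continuousAt (hg0 y hy)).congr ?_
    filter_upwards [isOpen_ne.mem_nhds hy] with x hx
    exact (hq x hx).symm

theorem hasDerivAt_gaussian (c a y : ℝ) :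
    HasDerivAt (fun y => c * Real.exp (-y ^ 2 / a)) (c * Real.exp (-y ^ 2 / a) * (-2 * y / a)) y :=
  ((((hasDerivAt_pow 2 y).fun_neg.div_const a).exp).const_mul c).congr_deriv (by ring)

theorem hasDerivAt_integral_gaussian (c a y : ℝ) :
    HasDerivAt (fun u => ∫ z in (0:ℝ)..u, c * Real.exp (-z ^ 2 / a))
      (c * Real.exp (-y ^ 2 / a)) y :=
  have hcont : Continuous fun z : ℝ => c * Real.exp (-z ^ 2 / a) := by fun_prop
  intervalIntegral.integral_hasDerivAt_right (hcont.intervalIntegrable _ _)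
    (hcont.stronglyMeasurableAtFilter _ _) hcont.continuousAt

theorem gaussian_comparison {s γ₀ γ₁ γ₂ : ℝ} (hs : 0 ≤ s) (hγ₀ : 0 < γ₀)
    (hγ₁ : γ₁ ∈ Ioc (0:ℝ) 1) (hγ₂ : γ₂ ∈ Icc (0:ℝ) 1) (y : ℝ) :
    γ₂ * (γ₀^2 * γ₁^3 / Real.sqrt (s + γ₀^2*γ₁^2) * Real.exp (-y^2 / (s + γ₀^2*γ₁^2)))
      ≤ γ₀^2 / Real.sqrt (s + γ₀^2) * Real.exp (-y^2 / (s + γ₀^2)) := by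
  obtain ⟨hγ₁0, hγ₁1⟩ := hγ₁
  obtain ⟨hγ₂0, hγ₂1⟩ := hγ₂
  have ha₂ : 0 < s + γ₀^2*γ₁^2 := by positivity
  have hγ₁sq : γ₁^2 ≤ 1 := pow_le_one₀ hγ₁0.le hγ₁1
  have hsqrt : γ₁ * Real.sqrt (s + γ₀^2) ≤ Real.sqrt (s + γ₀^2*γ₁^2) := by
    have h := Real.sqrt_le_sqrt (show γ₁^2 * (s + γ₀^2) ≤ s + γ₀^2*γ₁^2 by nlinarith)
    rwa [Real.sqrt_mul (sq_nonneg _), Real.sqrt_sq hγ₁0.le] at h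
  have hcoef : γ₂ * (γ₀^2 * γ₁^3 / Real.sqrt (s + γ₀^2*γ₁^2)) ≤ γ₀^2 / Real.sqrt (s + γ₀^2) := by
    rw [mul_div_assoc', div_le_div_iff₀ (Real.sqrt_pos.2 ha₂) (Real.sqrt_pos.2 (by positivity))]
    calc γ₂ * (γ₀^2 * γ₁^3) * Real.sqrt (s + γ₀^2)
        = (γ₂ * γ₁^2) * γ₀^2 * (γ₁ * Real.sqrt (s + γ₀^2)) := by ring
      _ ≤ 1 * γ₀^2 * Real.sqrt (s + γ₀^2*γ₁^2) := by
        gcongr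
        nlinarith
      _ = γ₀^2 * Real.sqrt (s + γ₀^2*γ₁^2) := by ring
  have hexp : Real.exp (-y^2 / (s + γ₀^2*γ₁^2)) ≤ Real.exp (-y^2 / (s + γ₀^2)) := by
    rw [Real.exp_le_exp, neg_div, neg_div, neg_le_neg_iff]
    exact div_le_div_of_nonneg_left (sq_nonneg y) ha₂ (by nlinarith)
  calc γ₂ * (γ₀^2 * γ₁^3 / Real.sqrt (s + γ₀^2*γ₁^2) * Real.exp (-y^2 / (s + γ₀^2*γ₁^2)))
      = γ₂ * (γ₀^2 * γ₁^3 / Real.sqrt (s + γ₀^2*γ₁^2)) * Real.exp (-y^2 / (s + γ₀^2*γ₁^2)) := by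
        ring
    _ ≤ γ₀^2 / Real.sqrt (s + γ₀^2) * Real.exp (-y^2 / (s + γ₀^2)) :=
        mul_le_mul hcoef hexp (Real.exp_pos _).le (by positivity)

section ShearFlow

variable {ν M γ₀ γ₁ γ₂ t : ℝ}

def shearFlowDeriv (ν M γ₀ γ₁ γ₂ t y : ℝ) : ℝ :=
  1 + M * (γ₀^2 / Real.sqrt (4*ν*t + γ₀^2) * Real.exp (-y^2 / (4*ν*t + γ₀^2))
    - γ₂ * (γ₀^2 * γ₁^3 / Real.sqrt (4*ν*t + γ₀^2*γ₁^2) *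
        Real.exp (-y^2 / (4*ν*t + γ₀^2*γ₁^2))))

def shearFlowDeriv2 (ν M γ₀ γ₁ γ₂ t y : ℝ) : ℝ :=
  M * (γ₀^2 / Real.sqrt (4*ν*t + γ₀^2) * Real.exp (-y^2 / (4*ν*t + γ₀^2)) * (-2*y / (4*ν*t + γ₀^2))
    - γ₂ * (γ₀^2 * γ₁^3 / Real.sqrt (4*ν*t + γ₀^2*γ₁^2) *
        Real.exp (-y^2 / (4*ν*t + γ₀^2*γ₁^2)) * (-2*y / (4*ν*t + γ₀^2*γ₁^2))))

theorem shearFlow_zero : shearFlow ν M γ₀ γ₁ γ₂ t 0 = 0 := by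
  simp [shearFlow]

theorem shearFlowDeriv2_zero : shearFlowDeriv2 ν M γ₀ γ₁ γ₂ t 0 = 0 := by
  simp [shearFlowDeriv2]

theorem hasDerivAt_shearFlow (y : ℝ) :
    HasDerivAt (shearFlow ν M γ₀ γ₁ γ₂ t) (shearFlowDeriv ν M γ₀ γ₁ γ₂ t y) y :=
  (hasDerivAt_id y).add (((hasDerivAt_integral_gaussian _ _ y).sub
    ((hasDerivAt_integral_gaussian _ _ y).const_mul γ₂)).const_mul M)

theorem hasDerivAt_shearFlowDeriv (y : ℝ) :
    HasDerivAt (shearFlowDeriv ν M γ₀ γ₁ γ₂ t) (shearFlowDeriv2 ν M γ₀ γ₁ γ₂ t y) y :=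
  (((hasDerivAt_gaussian _ _ y).sub
    ((hasDerivAt_gaussian _ _ y).const_mul γ₂)).const_mul M).const_add 1

theorem deriv_deriv_shearFlow :
    deriv (deriv (shearFlow ν M γ₀ γ₁ γ₂ t)) = shearFlowDeriv2 ν M γ₀ γ₁ γ₂ t := by
  rw [show deriv (shearFlow ν M γ₀ γ₁ γ₂ t) = shearFlowDeriv ν M γ₀ γ₁ γ₂ t from
    funext fun y => (hasDerivAt_shearFlow y).deriv]
  exact funext fun y => (hasDerivAt_shearFlowDeriv y).deriv

theorem continuous_shearFlowDeriv2 : Continuous (shearFlowDeriv2 ν M γ₀ γ₁ γ₂ t) := by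
  unfold shearFlowDeriv2
  fun_prop

theorem one_le_shearFlowDeriv (hν : 0 ≤ ν) (hM : 0 ≤ M) (hγ₀ : 0 < γ₀)
    (hγ₁ : γ₁ ∈ Ioc (0:ℝ) 1) (hγ₂ : γ₂ ∈ Icc (0:ℝ) 1) (ht : 0 ≤ t) (y : ℝ) :
    1 ≤ shearFlowDeriv ν M γ₀ γ₁ γ₂ t y :=
  le_add_of_nonneg_right <| mul_nonneg hM <| sub_nonneg.2 <|
    gaussian_comparison (by positivity) hγ₀ hγ₁ hγ₂ y

theorem isSchrodingerSolution_shearFlow {q : ℝ → ℝ}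
    (h1 : ∀ y, 1 ≤ shearFlowDeriv ν M γ₀ γ₁ γ₂ t y)
    (hq : ∀ y, y ≠ 0 →
      q y = deriv (deriv (shearFlow ν M γ₀ γ₁ γ₂ t)) y / shearFlow ν M γ₀ γ₁ γ₂ t y) :
    IsSchrodingerSolution q 0 (shearFlow ν M γ₀ γ₁ γ₂ t) (shearFlowDeriv ν M γ₀ γ₁ γ₂ t) where
  hasDerivAt := hasDerivAt_shearFlow
  hasDerivAt_deriv y := by
    convert hasDerivAt_shearFlowDeriv y using 1
    rcases eq_or_ne y 0 with rfl | hy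
    · rw [shearFlow_zero, shearFlowDeriv2_zero, mul_zero]
    · rw [hq y hy, deriv_deriv_shearFlow, sub_zero,
        div_mul_cancel₀ _ (ne_zero_of_one_le_deriv hasDerivAt_shearFlow h1 shearFlow_zero hy)]

end ShearFlow

theorem at_most_one_negative_eigenvalue_general (ν M γ₀ γ₁ γ₂ t : ℝ) (hν : 0 < ν) (hM : 0 < M)
    (hγ₀ : γ₀ ∈ Set.Ioo (0:ℝ) 1) (hγ₁ : γ₁ ∈ Set.Ioo (0:ℝ) 1)
    (hγ₂ : γ₂ ∈ Set.Ioo (0:ℝ) 1) (ht : 0 ≤ t)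
    (q : ℝ → ℝ) (hq0 : ContinuousAt q 0)
    (hq : ∀ y : ℝ, y ≠ 0 →
      q y = deriv (deriv (shearFlow ν M γ₀ γ₁ γ₂ t)) y / shearFlow ν M γ₀ γ₁ γ₂ t y)
    (lam₁ lam₂ : ℝ) (hlam₁ : lam₁ < 0) (hlam₂ : lam₂ < 0)
    (φ₁ φ₂ : ℝ → ℝ)
    (hφ₁ne : φ₁ ≠ 0) (hφ₂ne : φ₂ ≠ 0)
    (hφ₁ : ContDiff ℝ 2 φ₁) (hφ₂ : ContDiff ℝ 2 φ₂)
    (hφ₁L2 : MemLp φ₁ 2 (volume : Measure ℝ))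
    (hφ₁'L2 : MemLp (deriv φ₁) 2 (volume : Measure ℝ))
    (hφ₂L2 : MemLp φ₂ 2 (volume : Measure ℝ))
    (hφ₂'L2 : MemLp (deriv φ₂) 2 (volume : Measure ℝ))
    (heq₁ : ∀ y : ℝ, -deriv (deriv φ₁) y + q y * φ₁ y = lam₁ * φ₁ y)
    (heq₂ : ∀ y : ℝ, -deriv (deriv φ₂) y + q y * φ₂ y = lam₂ * φ₂ y) :
    lam₁ = lam₂ := by
  have hb' : ∀ y, 1 ≤ shearFlowDeriv ν M γ₀ γ₁ γ₂ t y :=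
    one_le_shearFlowDeriv hν.le hM.le hγ₀.1 (Ioo_subset_Ioc_self hγ₁) (Ioo_subset_Icc_self hγ₂) ht
  have hb := isSchrodingerSolution_shearFlow hb' hq
  have hbpos : ∀ y, 0 ≤ y → y ≤ shearFlow ν M γ₀ γ₁ γ₂ t y := fun _ =>
    self_le_of_one_le_deriv hasDerivAt_shearFlow hb' shearFlow_zero
  have hbneg : ∀ y, y ≤ 0 → shearFlow ν M γ₀ γ₁ γ₂ t y ≤ y := fun _ =>
    le_self_of_one_le_deriv hasDerivAt_shearFlow hb' shearFlow_zero
  have hqc : Continuous q :=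
    continuous_of_eq_div continuous_shearFlowDeriv2 hb.continuous
      (fun _ => ne_zero_of_one_le_deriv hasDerivAt_shearFlow hb' shearFlow_zero)
      (fun y hy => by rw [hq y hy, deriv_deriv_shearFlow]) hq0
  have h₁ := IsSchrodingerSolution.of_contDiff hφ₁ heq₁
  have h₂ := IsSchrodingerSolution.of_contDiff hφ₂ heq₂
  by_contra hne
  refine integral_ne_zero_of_forall_ne_zero (h₁.continuous.mul h₂.continuous)
    (hφ₁L2.integrable_mul hφ₂L2) (fun y => mul_ne_zero ?_ ?_)
    (h₁.integral_mul_eq_zero h₂ hne hφ₁L2 hφ₁'L2 hφ₂L2 hφ₂'L2)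
  · exact h₁.ne_zero hlam₁ hφ₁L2 hφ₁ne hqc hb hbpos hbneg y
  · exact h₂.ne_zero hlam₂ hφ₂L2 hφ₂ne hqc hb hbpos hbneg y

/-- at-most-one-negative-eigenvalue part of Lemma 2.1.
With `b = b(t,·)` the shear flow and `q` the continuous extension of `b''/b`, if
`λ₁ < 0` and `λ₂ < 0` are both eigenvalues of the Schrödinger operator
`L = −d²/dy² + q` (with `C²` eigenfunctions in `L²` together with their first two
derivatives), then `λ₁ = λ₂`. -/
theorem at_most_one_negative_eigenvalue (ν M γ₀ γ₁ γ₂ t : ℝ) (hν : 0 < ν) (hM : 0 < M)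
    (hγ₀ : γ₀ ∈ Set.Ioo (0:ℝ) 1) (hγ₁ : γ₁ ∈ Set.Ioo (0:ℝ) 1)
    (hγ₂ : γ₂ ∈ Set.Ioo (0:ℝ) 1) (ht : 0 ≤ t)
    (q : ℝ → ℝ) (hq0 : ContinuousAt q 0)
    (hq : ∀ y : ℝ, y ≠ 0 →
      q y = deriv (deriv (shearFlow ν M γ₀ γ₁ γ₂ t)) y / shearFlow ν M γ₀ γ₁ γ₂ t y)
    (lam₁ lam₂ : ℝ) (hlam₁ : lam₁ < 0) (hlam₂ : lam₂ < 0)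
    (φ₁ φ₂ : ℝ → ℝ)
    (hφ₁ne : φ₁ ≠ 0) (hφ₂ne : φ₂ ≠ 0)
    (hφ₁ : ContDiff ℝ 2 φ₁) (hφ₂ : ContDiff ℝ 2 φ₂)
    (hφ₁L2 : MemLp φ₁ 2 (volume : Measure ℝ))
    (hφ₁'L2 : MemLp (deriv φ₁) 2 (volume : Measure ℝ))
    (hφ₁''L2 : MemLp (deriv (deriv φ₁)) 2 (volume : Measure ℝ))
    (hφ₂L2 : MemLp φ₂ 2 (volume : Measure ℝ))
    (hφ₂'L2 : MemLp (deriv φ₂) 2 (volume : Measure ℝ))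
    (hφ₂''L2 : MemLp (deriv (deriv φ₂)) 2 (volume : Measure ℝ))
    (heq₁ : ∀ y : ℝ, -deriv (deriv φ₁) y + q y * φ₁ y = lam₁ * φ₁ y)
    (heq₂ : ∀ y : ℝ, -deriv (deriv φ₂) y + q y * φ₂ y = lam₂ * φ₂ y) :
    lam₁ = lam₂ :=
  at_most_one_negative_eigenvalue_general ν M γ₀ γ₁ γ₂ t hν hM hγ₀ hγ₁ hγ₂ ht q hq0 hq lam₁ lam₂
    hlam₁ hlam₂ φ₁ φ₂ hφ₁ne hφ₂ne hφ₁ hφ₂ hφ₁L2 hφ₁'L2 hφ₂L2 hφ₂'L2 heq₁ heq₂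

end
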